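/- arXiv:2305.04292 — 5 statements merged into one kernel-verified Lean document; each statement's English description precedes it below -/
import Mathlib

section
/- There exist a function f⁰ ∈ C^∞(ℓ²) (i.e. all iterated coordinatewise partial derivatives of f⁰ of every order exist and are continuous on ℓ²) and a point z₀ ∈ ℓ² such that f⁰ is not Fréchet differentiable at z₀; that is, there is no continuous real-linear map L : ℓ² → ℂ with lim_{h→0} |f⁰(z₀ + h) − f⁰(z₀) − L(h)| / ||h|| = 0. -/
open MeasureTheory Filter Metric Set
open scoped ENNReal NNReal Topology ComplexOrder

noncomputable section


noncomputable section

abbrev H : Type := lp (fun _ : ℕ => ℂ) 2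

/-- The direction vector: `(true, j) ↦ e_j` (the `x_j` direction) and
`(false, j) ↦ √-1 • e_j` (the `y_j` direction). -/
noncomputable def dir : Bool × ℕ → H :=
  fun d => if d.1 then lp.single 2 d.2 (1 : ℂ) else lp.single 2 d.2 Complex.I

/-- The partial derivative of `f` at `z` in the direction `v` (junk value if it does not exist):
`lim_{ℝ ∋ τ → 0} (f (z + τ • v) - f z)/τ`. -/
noncomputable def pder (v : H) (f : H → ℂ) (z : H) : ℂ :=
  deriv (fun τ : ℝ => f (z + τ • v)) 0

/-- Existence of the partial derivative of `f` at `z` in the direction `v`. -/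
def HasPD (v : H) (f : H → ℂ) (z : H) : Prop :=
  DifferentiableAt ℝ (fun τ : ℝ => f (z + τ • v)) 0

/-- `coordD (true, j) = D_{x_j}`, `coordD (false, j) = D_{y_j}`. -/
noncomputable def coordD (d : Bool × ℕ) (f : H → ℂ) : H → ℂ := pder (dir d) f

/-- Iterated coordinatewise partial derivatives. -/
noncomputable def iterD : List (Bool × ℕ) → (H → ℂ) → H → ℂ
  | [], f => f
  | d :: L, f => coordD d (iterD L f)

/-- `f ∈ C^k(V)` : all partial derivatives of order `< k` exist on `V`, and all iterated
partial derivatives of order `≤ k` are continuous on `V`. -/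
def MemCk (V : Set H) (k : ℕ) (f : H → ℂ) : Prop :=
  (∀ L : List (Bool × ℕ), L.length ≤ k → ContinuousOn (iterD L f) V) ∧
  (∀ L : List (Bool × ℕ), L.length < k → ∀ d : Bool × ℕ, ∀ z ∈ V, HasPD (dir d) (iterD L f) z)

/-- `f ∈ C^∞(V)`. -/
def MemCinf (V : Set H) (f : H → ℂ) : Prop := ∀ k : ℕ, MemCk V k f

/-- `f ∈ C^k_b(V)` : moreover `f` and its partial derivatives up to order `k` are bounded. -/
def MemCkb (V : Set H) (k : ℕ) (f : H → ℂ) : Prop :=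
  MemCk V k f ∧ ∀ L : List (Bool × ℕ), L.length ≤ k → ∃ M : ℝ, ∀ z ∈ V, ‖iterD L f z‖ ≤ M

/-- `S ⊂∘ V` : `S` is uniformly included in `V`. -/
def UnifIncl (S V : Set H) : Prop :=
  ∃ r R : ℝ, 0 < r ∧ 0 < R ∧ (∀ z ∈ S, Metric.ball z r ⊆ V) ∧ S ⊆ Metric.ball 0 R

/-- The support of `f` relative to `V` (the closure, in the subspace topology of `V`,
of `{z ∈ V | f z ≠ 0}`). -/
def suppIn (V : Set H) (f : H → ℂ) : Set H := V ∩ closure {z | z ∈ V ∧ f z ≠ 0}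

/-- `f ∈ C^k_0(V)`. -/
def MemCkZero (V : Set H) (k : ℕ) (f : H → ℂ) : Prop :=
  MemCkb V k f ∧ UnifIncl (suppIn V f) V

/-- `f ∈ C^∞_0(V)`. -/
def MemCinfZero (V : Set H) (f : H → ℂ) : Prop := ∀ k : ℕ, MemCkZero V k f

/-- `∂_j f`. -/
noncomputable def pd (j : ℕ) (f : H → ℂ) (z : H) : ℂ :=
  (coordD (true, j) f z - Complex.I * coordD (false, j) f z) / 2

/-- `∂̄_j f`. -/
noncomputable def dbar (j : ℕ) (f : H → ℂ) (z : H) : ℂ :=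
  (coordD (true, j) f z + Complex.I * coordD (false, j) f z) / 2

/-- `δ_j f = ∂_j f - (z̄_j/(2 a_j²)) f`. -/
noncomputable def deltaOp (a : ℕ → ℝ) (j : ℕ) (f : H → ℂ) (z : H) : ℂ :=
  pd j f z - (starRingEnd ℂ) (z j) / (2 * (a j : ℂ) ^ 2) * f z

/-- The boundedness condition defining `C¹_F(V)`:
`sup_E (|f| + ∑_i (|D_{x_i} f|² + |D_{y_i} f|²)) < ∞` for every `E ⊂∘ V`. -/
def FBound (V : Set H) (f : H → ℂ) : Prop :=
  ∀ E : Set H, UnifIncl E V → ∃ M : ℝ, ∀ z ∈ E,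
    ENNReal.ofReal ‖f z‖ +
      ∑' j : ℕ, (ENNReal.ofReal (‖coordD (true, j) f z‖ ^ 2) +
        ENNReal.ofReal (‖coordD (false, j) f z‖ ^ 2)) ≤ ENNReal.ofReal M

/-- `f ∈ C¹_F(V)`. -/
def MemC1F (V : Set H) (f : H → ℂ) : Prop := MemCk V 1 f ∧ FBound V f

/-- `f ∈ C^∞_{0,F}(V) = C^∞_0(V) ∩ C¹_F(V)`. -/
def MemC0F (V : Set H) (f : H → ℂ) : Prop := MemCinfZero V f ∧ MemC1F V f

/-- Iterated Wirtinger derivatives: `(true, j) ↦ ∂_j`, `(false, j) ↦ ∂̄_j`. -/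
noncomputable def wIter : List (Bool × ℕ) → (H → ℂ) → H → ℂ
  | [], f => f
  | (b, j) :: L, f => if b then pd j (wIter L f) else dbar j (wIter L f)

/-- `f ∈ C^∞_{0,F^∞}(V)` : `f ∈ C^∞_0(V)` and `∂_α ∂̄_β f ∈ C¹_F(V)` for all
finitely supported multi-indices `α`, `β`. -/
def MemC0Finf (V : Set H) (f : H → ℂ) : Prop :=
  MemCinfZero V f ∧
  ∀ Lα Lβ : List ℕ,
    MemC1F V (wIter (Lα.map (fun i => (true, i)) ++ Lβ.map (fun j => (false, j))) f)

/-- A real-valued function regarded as a complex-valued one. -/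
def cplx (φ : H → ℝ) : H → ℂ := fun z => (φ z : ℂ)

/-- The Levi form `∑_{1 ≤ i,j ≤ n} (∂_i ∂̄_j η)(z) ζ_i conj(ζ_j)`. -/
noncomputable def herm (η : H → ℂ) (n : ℕ) (z : H) (ζ : ℕ → ℂ) : ℂ :=
  ∑ i ∈ Finset.range n, ∑ j ∈ Finset.range n,
    pd i (dbar j η) z * ζ i * (starRingEnd ℂ) (ζ j)

/-- Plurisubharmonicity inequality (the order on `ℂ` is the `ComplexOrder`). -/
def PSH (V : Set H) (η : H → ℂ) : Prop :=
  ∀ n : ℕ, ∀ z ∈ V, ∀ ζ : ℕ → ℂ, 0 ≤ herm η n z ζ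

/-- `α` is an exhaustion function of `V`. -/
def Exhausts (V : Set H) (α : H → ℝ) : Prop :=
  ∀ τ : ℝ, UnifIncl {z | z ∈ V ∧ α z ≤ τ} V

/-- `η` is a plurisubharmonic exhaustion function of `V` of class `C^∞_F(V)`. -/
def IsPSHExhaustion (V : Set H) (η : H → ℝ) : Prop :=
  MemCinf V (cplx η) ∧ FBound V (cplx η) ∧ Exhausts V η ∧ PSH V (cplx η)

/-- `V` is a pseudo-convex domain in `ℓ²`. -/
def Pseudoconvex (V : Set H) : Prop :=
  IsOpen V ∧ V.Nonempty ∧ ∃ η : H → ℝ, IsPSHExhaustion V η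

/-- `d(E₁, E₂)`, with value `∞` when either set is empty. -/
noncomputable def setEDist (E₁ E₂ : Set H) : ℝ≥0∞ :=
  ⨅ z₁ ∈ E₁, ⨅ z₂ ∈ E₂, edist z₁ z₂

/-- `d_V(S) = min{d(S, ∂V), 1/sup_{z ∈ S} ‖z‖}` (conventions `1/0 = ∞`, `1/∞ = 0`). -/
noncomputable def dV (V S : Set H) : ℝ≥0∞ :=
  min (setEDist S (frontier V)) (⨆ z ∈ S, (‖z‖₊ : ℝ≥0∞))⁻¹

/-- The Gaussian probability measure `𝒩_σ` on `ℂ`. -/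
noncomputable def gauss (σ : ℝ) : Measure ℂ :=
  volume.withDensity fun z =>
    ENNReal.ofReal ((2 * Real.pi * σ ^ 2)⁻¹ * Real.exp (-(z.re ^ 2 + z.im ^ 2) / (2 * σ ^ 2)))

/-- `P` is the Borel probability measure on `ℓ²` induced by the product of the Gaussian
measures `𝒩_{a_i}`, characterized through its finite-dimensional cylinder marginals. -/
def IsGaussMeasure [MeasurableSpace H] (a : ℕ → ℝ) (P : Measure H) : Prop :=
  IsProbabilityMeasure P ∧
  ∀ (n : ℕ) (E : ℕ → Set ℂ), (∀ i, MeasurableSet (E i)) →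
    P {z : H | ∀ i < n, z i ∈ E i} = ∏ i ∈ Finset.range n, gauss (a i) (E i)


/-!
Put a smooth bump `g n` of height `t n = 2⁻ⁿ` on the coordinate axis `z n`, centred at `t n`
and vanishing near `0` and at `2 t n`, and let `f z = ∑ n, g n (z n)`. The heights are summable,
so `f` is continuous, and along a coordinate line only one summand moves, so every partial
derivative of `f` is a smooth function of a single coordinate; hence `f ∈ C^∞`. Since
`f (2 t n • e n) = f 0`, a Fréchet derivative at `0` would force `f (h) - f 0 = o(‖h‖)` along
`h = t n • e n`, whereas `f (t n • e n) = t n = ‖t n • e n‖`.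
-/

open Asymptotics
open scoped ContDiff

theorem not_differentiableAt_of_two_smul_eq {E F α : Type*} [NormedAddCommGroup E]
    [NormedSpace ℝ E] [NormedAddCommGroup F] [NormedSpace ℝ F] {f : E → F} {x : E}
    {l : Filter α} {v : α → E} (hv : Tendsto v l (𝓝 0))
    (hf2 : ∀ n, f (x + (2 : ℝ) • v n) = f x)
    (hf : ¬ (fun n => f (x + v n) - f x) =o[l] v) : ¬ DifferentiableAt ℝ f x := by
  intro hd
  have hr := hasFDerivAt_iff_isLittleO_nhds_zero.1 hd.hasFDerivAt
  have hr2 : (fun n => f (x + (2 : ℝ) • v n) - f x - fderiv ℝ f x ((2 : ℝ) • v n)) =o[l] v :=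
    (hr.comp_tendsto (by simpa using hv.const_smul (2 : ℝ))).trans_isBigO
      ((isBigO_refl v l).const_smul_left 2)
  -- with `r` the remainder of the derivative, `f (x + v) - f x = r v - r (2 • v) / 2`
  refine hf (((hr.comp_tendsto hv).sub (hr2.const_smul_left (2⁻¹ : ℝ))).congr_left fun n => ?_)
  simp only [Function.comp_apply, Pi.smul_apply, hf2, map_smul]
  module

lemma add_smul_dir_apply (z : H) (τ : ℝ) (d : Bool × ℕ) (m : ℕ) :
    (z + τ • dir d) m = z m + τ • dir d m :=
  rfl

lemma dir_apply_of_ne {d : Bool × ℕ} {m : ℕ} (hm : m ≠ d.2) : dir d m = 0 := by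
  unfold dir
  split_ifs <;> exact lp.single_apply_ne 2 _ _ hm

lemma hasPD_and_coordD_eq_of_line {F : H → ℂ} {h : ℂ → ℂ} (hh : Differentiable ℝ h)
    {d : Bool × ℕ} {z : H} {w c : ℂ}
    (hline : ∀ τ : ℝ, F (z + τ • dir d) = F z + (h (w + τ • c) - h w)) :
    HasPD (dir d) F z ∧ coordD d F z = fderiv ℝ h w c := by
  have hlin : HasDerivAt (fun τ : ℝ => w + τ • c) c 0 := by
    simpa using ((hasDerivAt_id (0 : ℝ)).smul_const c).const_add w
  have hderiv : HasDerivAt (fun τ : ℝ => F (z + τ • dir d)) (fderiv ℝ h w c) 0 := by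
    rw [funext hline]
    simpa using (((hh _).hasFDerivAt.comp_hasDerivAt 0 hlin).sub_const (h w)).const_add (F z)
  exact ⟨hderiv.differentiableAt, hderiv.deriv⟩

lemma contDiff_fderiv_apply {h : ℂ → ℂ} (hh : ContDiff ℝ ∞ h) (c : ℂ) :
    ContDiff ℝ ∞ (fun w => fderiv ℝ h w c) :=
  (hh.fderiv_right le_rfl).clm_apply contDiff_const

lemma memCinf_of_forall_coordD (S : (H → ℂ) → Prop) (hcont : ∀ F, S F → Continuous F)
    (hpd : ∀ F, S F → ∀ d z, HasPD (dir d) F z) (hcoordD : ∀ F, S F → ∀ d, S (coordD d F))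
    {f : H → ℂ} (hf : S f) (V : Set H) : MemCinf V f := by
  have hiter (L : List (Bool × ℕ)) : S (iterD L f) := by
    induction L with
    | nil => exact hf
    | cons d L ih => exact hcoordD _ ih d
  exact fun _ => ⟨fun L _ => (hcont _ (hiter L)).continuousOn,
    fun L _ d z _ => hpd _ (hiter L) d z⟩

def IsSmoothOfCoord (F : H → ℂ) : Prop :=
  ∃ (j : ℕ) (h : ℂ → ℂ), ContDiff ℝ ∞ h ∧ F = fun z => h (z j)

namespace IsSmoothOfCoord

variable {F : H → ℂ}

lemma continuous (hF : IsSmoothOfCoord F) : Continuous F := by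
  obtain ⟨j, h, hh, rfl⟩ := hF
  exact hh.continuous.comp (lp.lipschitzWith_one_eval 2 j).continuous

lemma hasPD_and_coordD (hF : IsSmoothOfCoord F) (d : Bool × ℕ) :
    (∀ z, HasPD (dir d) F z) ∧ IsSmoothOfCoord (coordD d F) := by
  obtain ⟨j, h, hh, rfl⟩ := hF
  have hline (z : H) := hasPD_and_coordD_eq_of_line (hh.differentiable (by simp))
    (F := fun z => h (z j)) (z := z) (d := d) (w := z j) (c := dir d j) fun τ =>
      (add_sub_cancel (h (z j)) _).symm
  exact ⟨fun z => (hline z).1, j, _, contDiff_fderiv_apply hh (dir d j),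
    funext fun z => (hline z).2⟩

end IsSmoothOfCoord

def coordTsum (g : ℕ → ℂ → ℂ) (z : H) : ℂ := ∑' n, g n (z n)

section CoordTsum

variable {g : ℕ → ℂ → ℂ} {b : ℕ → ℝ}

lemma coordTsum_add_smul_dir (hb : Summable b) (hgb : ∀ n w, ‖g n w‖ ≤ b n) (z : H) (τ : ℝ)
    (d : Bool × ℕ) : coordTsum g (z + τ • dir d) =
      coordTsum g z + (g d.2 (z d.2 + τ • dir d d.2) - g d.2 (z d.2)) := by
  have hsum (w : H) : Summable fun n => g n (w n) := .of_norm_bounded hb fun n => hgb n (w n)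
  have hsingle : ∑' m, (g m ((z + τ • dir d) m) - g m (z m))
      = g d.2 (z d.2 + τ • dir d d.2) - g d.2 (z d.2) :=
    tsum_eq_single d.2 fun m hm => by
      rw [add_smul_dir_apply, dir_apply_of_ne hm, smul_zero, add_zero, sub_self]
  rw [← hsingle, (hsum _).tsum_sub (hsum z), coordTsum, coordTsum, add_sub_cancel]

lemma continuous_coordTsum (hg : ∀ n, Continuous (g n)) (hb : Summable b)
    (hgb : ∀ n w, ‖g n w‖ ≤ b n) : Continuous (coordTsum g) :=
  continuous_tsum (fun n => (hg n).comp (lp.lipschitzWith_one_eval 2 n).continuous) hb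
    fun n z => hgb n (z n)

lemma hasPD_coordTsum_and_coordD (hg : ∀ n, ContDiff ℝ ∞ (g n)) (hb : Summable b)
    (hgb : ∀ n w, ‖g n w‖ ≤ b n) (d : Bool × ℕ) :
    (∀ z, HasPD (dir d) (coordTsum g) z) ∧ IsSmoothOfCoord (coordD d (coordTsum g)) := by
  have hline (z : H) := hasPD_and_coordD_eq_of_line ((hg d.2).differentiable (by simp))
    (coordTsum_add_smul_dir hb hgb z · d)
  exact ⟨fun z => (hline z).1, d.2, _, contDiff_fderiv_apply (hg d.2) (dir d d.2),
    funext fun z => (hline z).2⟩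

lemma coordTsum_single (hg0 : ∀ n, g n 0 = 0) (j : ℕ) (a : ℂ) :
    coordTsum g (lp.single 2 j a) = g j a := by
  rw [coordTsum, tsum_eq_single j fun m hm => by simp [hm, hg0]]
  simp

lemma memCinf_coordTsum (hg : ∀ n, ContDiff ℝ ∞ (g n)) (hb : Summable b)
    (hgb : ∀ n w, ‖g n w‖ ≤ b n) (V : Set H) : MemCinf V (coordTsum g) := by
  refine memCinf_of_forall_coordD (fun F => F = coordTsum g ∨ IsSmoothOfCoord F) ?_ ?_ ?_
    (Or.inl rfl) V
  · rintro F (rfl | hF)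
    exacts [continuous_coordTsum (fun n => (hg n).continuous) hb hgb, hF.continuous]
  · rintro F (rfl | hF) d
    exacts [(hasPD_coordTsum_and_coordD hg hb hgb d).1, (hF.hasPD_and_coordD d).1]
  · rintro F (rfl | hF) d
    exacts [Or.inr (hasPD_coordTsum_and_coordD hg hb hgb d).2, Or.inr (hF.hasPD_and_coordD d).2]

end CoordTsum

def height (n : ℕ) : ℝ := 2⁻¹ ^ n

lemma height_pos (n : ℕ) : 0 < height n := by
  unfold height; positivity

lemma summable_height : Summable height :=
  summable_geometric_of_lt_one (by norm_num) (by norm_num)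

lemma tendsto_height : Tendsto height atTop (𝓝 0) :=
  tendsto_pow_atTop_nhds_zero_of_lt_one (by norm_num) (by norm_num)

def spikeBump (n : ℕ) : ContDiffBump (height n : ℂ) :=
  ⟨height n / 4, height n / 2, by linarith [height_pos n], by linarith [height_pos n]⟩

def spike (n : ℕ) (w : ℂ) : ℂ := (height n * spikeBump n w : ℝ)

lemma contDiff_spike (n : ℕ) : ContDiff ℝ ∞ (spike n) :=
  Complex.ofRealCLM.contDiff.comp (contDiff_const.mul (spikeBump n).contDiff)

lemma norm_spike_le (n : ℕ) (w : ℂ) : ‖spike n w‖ ≤ height n := by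
  rw [spike, Complex.norm_real, Real.norm_eq_abs,
    abs_of_nonneg (mul_nonneg (height_pos n).le ((spikeBump n).nonneg' w))]
  exact mul_le_of_le_one_right (height_pos n).le (spikeBump n).le_one

lemma spike_eq_zero {n : ℕ} {w : ℂ} (hw : dist w (height n) = height n) : spike n w = 0 := by
  have hrOut : (spikeBump n).rOut ≤ dist w (height n) := by
    rw [hw]; exact half_le_self (height_pos n).le
  simp [spike, (spikeBump n).zero_of_le_dist hrOut]

lemma spike_zero (n : ℕ) : spike n 0 = 0 :=
  spike_eq_zero (by simp [abs_of_pos (height_pos n)])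

lemma spike_two_mul (n : ℕ) : spike n (2 * height n) = 0 :=
  spike_eq_zero (by rw [Complex.dist_eq]; simp [two_mul, abs_of_pos (height_pos n)])

lemma spike_height (n : ℕ) : spike n (height n) = height n := by
  have hrIn : (height n : ℂ) ∈ closedBall (height n : ℂ) (spikeBump n).rIn :=
    mem_closedBall_self (by simp only [spikeBump]; linarith [height_pos n])
  simp [spike, (spikeBump n).one_of_mem_closedBall hrIn]

/-- There exists `f⁰ ∈ C^∞(ℓ²)` and a point `z₀ ∈ ℓ²` at which `f⁰` is not
Fréchet differentiable (as a map of real Banach spaces). -/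
theorem smooth_not_frechet_differentiable :
    ∃ (f : H → ℂ) (z₀ : H), MemCinf Set.univ f ∧ ¬ DifferentiableAt ℝ f z₀ := by
  refine ⟨coordTsum spike, 0,
    memCinf_coordTsum contDiff_spike summable_height norm_spike_le univ, ?_⟩
  set v : ℕ → H := fun n => lp.single 2 n (height n : ℂ)
  have hv (n : ℕ) : ‖v n‖ = height n := by
    simp [v, lp.norm_single, abs_of_pos (height_pos n)]
  have hf0 : coordTsum spike 0 = 0 := by
    simpa [spike_zero] using coordTsum_single spike_zero 0 0
  refine not_differentiableAt_of_two_smul_eq (l := atTop) (v := v) ?_ (fun n => ?_)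
    fun hlo => ?_
  · simpa [tendsto_zero_iff_norm_tendsto_zero, hv] using tendsto_height
  · rw [zero_add, ← lp.single_smul, coordTsum_single spike_zero, hf0]
    simpa using spike_two_mul n
  · have hincr (n : ℕ) : coordTsum spike (0 + v n) - coordTsum spike 0 = height n := by
      rw [zero_add, hf0, sub_zero, coordTsum_single spike_zero, spike_height]
    refine isLittleO_irrefl' (Frequently.of_forall fun n => ?_)
      ((hlo.congr_left hincr).trans_isBigO (isBigO_of_le _ fun n => ?_))
    · simpa using (height_pos n).ne'
    · simp [hv, abs_of_pos (height_pos n)]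
end
end
end

section
/- For every nonempty open subset O of ℓ², it holds that P(O) > 0. -/
open MeasureTheory Filter Metric Set
open scoped ENNReal NNReal Topology ComplexOrder

noncomputable section


noncomputable section

/-!
A nonempty open set contains a ball `ball y ε` around a finitely supported point `y`. Since
`∑ a_i < 1`, the box `{z | ∀ i, ‖z_i - y_i‖ ≤ ε √a_i}` lies in that ball. By continuity from above,
its measure is the infinite product of the masses `𝒩_{a_i}(closedBall y_i (ε √a_i))`, all positive.
For the cofinitely many `i` with `y_i = 0`, the missing mass is at most `8 a_i / ε²` by the Gaussian
tail bound `𝒩_σ(‖w‖ > s) ≤ 2 exp(-s² / 4σ²)`, so it is summable and the product is positive.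
-/

open Real

theorem Complex.lintegral_exp_neg_mul_norm_sq {b : ℝ} (hb : 0 < b) :
    ∫⁻ z : ℂ, ENNReal.ofReal (Real.exp (-b * ‖z‖ ^ 2)) = ENNReal.ofReal (π / b) := by
  have h := GaussianFourier.integral_rexp_neg_mul_sq_norm (V := ℂ) hb
  rw [Complex.finrank_real_complex, Nat.cast_ofNat, div_self two_ne_zero, rpow_one] at h
  rw [← h, ofReal_integral_eq_lintegral_ofReal
    (.of_integral_ne_zero (by rw [h]; positivity)) (.of_forall fun _ => (Real.exp_pos _).le)]

theorem gauss_eq_withDensity (σ : ℝ) :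
    gauss σ = volume.withDensity fun z =>
      ENNReal.ofReal ((2 * π * σ ^ 2)⁻¹ * exp (-(2 * σ ^ 2)⁻¹ * ‖z‖ ^ 2)) := by
  unfold gauss
  congr with z
  rw [Complex.sq_norm, Complex.normSq_apply]
  ring_nf

theorem isProbabilityMeasure_gauss {σ : ℝ} (hσ : σ ≠ 0) : IsProbabilityMeasure (gauss σ) := by
  constructor
  rw [gauss_eq_withDensity, withDensity_apply _ .univ, Measure.restrict_univ]
  simp_rw [ENNReal.ofReal_mul (inv_nonneg.2 (by positivity : (0:ℝ) ≤ 2 * π * σ ^ 2))]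
  rw [lintegral_const_mul _ (by fun_prop), Complex.lintegral_exp_neg_mul_norm_sq (by positivity),
    ← ENNReal.ofReal_mul (by positivity)]
  rw [show (2 * π * σ ^ 2)⁻¹ * (π / (2 * σ ^ 2)⁻¹) = 1 by field_simp, ENNReal.ofReal_one]

theorem isOpenPosMeasure_gauss {σ : ℝ} (hσ : σ ≠ 0) : Measure.IsOpenPosMeasure (gauss σ) := by
  rw [gauss_eq_withDensity]
  refine (withDensity_absolutelyContinuous' (by fun_prop)
    (.of_forall fun z => (ENNReal.ofReal_pos.2 (by positivity)).ne')).isOpenPosMeasure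

theorem gauss_closedBall_zero_compl_le {σ s : ℝ} (hσ : σ ≠ 0) (hs : 0 ≤ s) :
    gauss σ (closedBall 0 s)ᶜ ≤ ENNReal.ofReal (2 * exp (-s ^ 2 / (4 * σ ^ 2))) := by
  set c := exp (-s ^ 2 / (4 * σ ^ 2)) * (2 * π * σ ^ 2)⁻¹ with hc
  have hdensity : ∀ z ∈ (closedBall (0 : ℂ) s)ᶜ,
      ENNReal.ofReal ((2 * π * σ ^ 2)⁻¹ * exp (-(2 * σ ^ 2)⁻¹ * ‖z‖ ^ 2)) ≤
        ENNReal.ofReal c * ENNReal.ofReal (exp (-(4 * σ ^ 2)⁻¹ * ‖z‖ ^ 2)) := by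
    intro z hz
    have hsz : s ^ 2 ≤ ‖z‖ ^ 2 := by
      rw [mem_compl_iff, mem_closedBall, dist_zero_right, not_le] at hz
      exact pow_le_pow_left₀ hs hz.le 2
    have hsplit : exp (-(2 * σ ^ 2)⁻¹ * ‖z‖ ^ 2) =
        exp (-(4 * σ ^ 2)⁻¹ * ‖z‖ ^ 2) * exp (-(4 * σ ^ 2)⁻¹ * ‖z‖ ^ 2) := by
      rw [← exp_add]
      congr 1
      field_simp
      ring
    have hdecay : exp (-(4 * σ ^ 2)⁻¹ * ‖z‖ ^ 2) ≤ exp (-s ^ 2 / (4 * σ ^ 2)) := by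
      rw [exp_le_exp, neg_div, neg_mul, neg_le_neg_iff, div_eq_inv_mul]
      gcongr
    rw [← ENNReal.ofReal_mul (by positivity), hsplit]
    refine ENNReal.ofReal_le_ofReal ?_
    calc (2 * π * σ ^ 2)⁻¹ * (exp (-(4 * σ ^ 2)⁻¹ * ‖z‖ ^ 2) * exp (-(4 * σ ^ 2)⁻¹ * ‖z‖ ^ 2))
        ≤ (2 * π * σ ^ 2)⁻¹ * (exp (-s ^ 2 / (4 * σ ^ 2)) * exp (-(4 * σ ^ 2)⁻¹ * ‖z‖ ^ 2)) := by
          gcongr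
      _ = c * exp (-(4 * σ ^ 2)⁻¹ * ‖z‖ ^ 2) := by ring
  calc gauss σ (closedBall 0 s)ᶜ
      = ∫⁻ z in (closedBall 0 s)ᶜ,
          ENNReal.ofReal ((2 * π * σ ^ 2)⁻¹ * exp (-(2 * σ ^ 2)⁻¹ * ‖z‖ ^ 2)) := by
        rw [gauss_eq_withDensity, withDensity_apply _ measurableSet_closedBall.compl]
    _ ≤ ∫⁻ z in (closedBall 0 s)ᶜ,
          ENNReal.ofReal c * ENNReal.ofReal (exp (-(4 * σ ^ 2)⁻¹ * ‖z‖ ^ 2)) :=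
        setLIntegral_mono (by fun_prop) hdensity
    _ ≤ ∫⁻ z, ENNReal.ofReal c * ENNReal.ofReal (exp (-(4 * σ ^ 2)⁻¹ * ‖z‖ ^ 2)) :=
        setLIntegral_le_lintegral _ _
    _ = ENNReal.ofReal (2 * exp (-s ^ 2 / (4 * σ ^ 2))) := by
        rw [lintegral_const_mul _ (by fun_prop),
          Complex.lintegral_exp_neg_mul_norm_sq (by positivity),
          ← ENNReal.ofReal_mul (by positivity), hc]
        congr 1
        field_simp
        ring

theorem measureReal_gauss_closedBall_zero_compl_le {σ s : ℝ} (hσ : σ ≠ 0) (hs : 0 < s) :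
    (gauss σ).real (closedBall 0 s)ᶜ ≤ 8 * σ ^ 2 / s ^ 2 := by
  refine ENNReal.toReal_le_of_le_ofReal (by positivity)
    ((gauss_closedBall_zero_compl_le hσ hs.le).trans (ENNReal.ofReal_le_ofReal ?_))
  have hexp := add_one_le_exp (s ^ 2 / (4 * σ ^ 2))
  calc 2 * exp (-s ^ 2 / (4 * σ ^ 2)) = 2 / exp (s ^ 2 / (4 * σ ^ 2)) := by
        rw [neg_div, exp_neg, ← div_eq_mul_inv]
    _ ≤ 2 / (s ^ 2 / (4 * σ ^ 2)) := by gcongr; linarith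
    _ = 8 * σ ^ 2 / s ^ 2 := by field_simp; ring

theorem Real.exists_pos_hasProd_of_summable_one_sub {ι : Type*} {p : ι → ℝ}
    (hp : ∀ i, 0 < p i) (hs : Summable fun i => 1 - p i) : ∃ c, 0 < c ∧ HasProd p c := by
  have hlog : Summable fun i => log (p i) := by
    simpa using
      Real.summable_log_one_add_of_summable (f := fun i => p i - 1) (by simpa using hs.neg)
  exact ⟨_, exp_pos _, Real.hasProd_of_hasSum_log hp hlog.hasSum⟩

namespace lp

variable {ι : Type*} {E : ι → Type*} [∀ i, NormedAddCommGroup (E i)]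

theorem exists_mem_forall_notMem_apply_eq_zero {p : ℝ≥0∞} [Fact (1 ≤ p)] (hp : p ≠ ∞)
    {O : Set (lp E p)} (hO : IsOpen O) (hne : O.Nonempty) :
    ∃ y ∈ O, ∃ s : Finset ι, ∀ i ∉ s, y i = 0 := by
  classical
  obtain ⟨x, hx⟩ := hne
  obtain ⟨s, hs⟩ := ((lp.hasSum_single hp x).eventually (hO.mem_nhds hx)).exists
  refine ⟨_, hs, s, fun i hi => ?_⟩
  rw [lp.coeFn_sum, Finset.sum_apply]
  exact Finset.sum_eq_zero fun j hj => Pi.single_eq_of_ne (ne_of_mem_of_not_mem hj hi).symm _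

theorem setOf_forall_mem_closedBall_subset_ball (y : lp E 2) {r : ι → ℝ} {ε : ℝ} (hε : 0 ≤ ε)
    (hr : Summable fun i => r i ^ 2) (hrε : ∑' i, r i ^ 2 < ε ^ 2) :
    {z : lp E 2 | ∀ i, z i ∈ closedBall (y i) (r i)} ⊆ ball y ε := by
  intro z hz
  have hle : ∀ i, ‖(z - y) i‖ ^ 2 ≤ r i ^ 2 := fun i =>
    pow_le_pow_left₀ (norm_nonneg _) (by simpa [dist_eq_norm] using hz i) 2
  have hnorm := lp.norm_rpow_eq_tsum (p := 2) (by norm_num) (z - y)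
  simp only [ENNReal.toReal_ofNat, rpow_two] at hnorm
  rw [mem_ball, dist_eq_norm]
  refine lt_of_pow_lt_pow_left₀ 2 hε ?_
  rw [hnorm]
  exact lt_of_le_of_lt
    (Summable.tsum_le_tsum hle (.of_nonneg_of_le (fun _ => sq_nonneg _) hle hr) hr) hrε

end lp

theorem tendsto_measure_setOf_forall_lt {α : Type*} [MeasurableSpace α] (μ : Measure α)
    [IsFiniteMeasure μ] {s : ℕ → Set α} (hs : ∀ i, MeasurableSet (s i)) :
    Tendsto (fun n => μ {x | ∀ i < n, x ∈ s i}) atTop (𝓝 (μ {x | ∀ i, x ∈ s i})) := by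
  have hinter : ⋂ n, {x | ∀ i < n, x ∈ s i} = {x | ∀ i, x ∈ s i} := by
    ext x
    simp only [mem_iInter, mem_ofPred_eq]
    exact ⟨fun h i => h (i + 1) i i.lt_succ_self, fun h _ i _ => h i⟩
  rw [← hinter]
  refine tendsto_measure_iInter_atTop (fun n => ?_)
    (fun m n hmn x hx i hi => hx i (hi.trans_le hmn)) ⟨0, measure_ne_top _ _⟩
  simp only [ofPred_forall]
  exact .iInter fun i => .iInter fun _ => (hs i).nullMeasurableSet

theorem IsGaussMeasure.measure_setOf_forall_mem_pos [MeasurableSpace H] [BorelSpace H]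
    {a : ℕ → ℝ} {P : Measure H} (hP : IsGaussMeasure a P) (ha : ∀ i, a i ≠ 0)
    {E : ℕ → Set ℂ} (hE : ∀ i, MeasurableSet (E i)) (hpos : ∀ i, 0 < gauss (a i) (E i))
    (hsum : Summable fun i => (gauss (a i)).real (E i)ᶜ) :
    0 < P {z : H | ∀ i, z i ∈ E i} := by
  have hprob i : IsProbabilityMeasure (gauss (a i)) := isProbabilityMeasure_gauss (ha i)
  have := hP.1
  obtain ⟨c, hc, hprod⟩ := Real.exists_pos_hasProd_of_summable_one_sub
    (fun i => ENNReal.toReal_pos (hpos i).ne' (measure_ne_top _ _))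
    (hsum.congr fun i => probReal_compl_eq_one_sub (hE i))
  have hcyl n : P {z : H | ∀ i < n, z i ∈ E i} =
      ENNReal.ofReal (∏ i ∈ Finset.range n, (gauss (a i)).real (E i)) := by
    rw [hP.2 n E hE, ENNReal.ofReal_prod_of_nonneg fun _ _ => measureReal_nonneg]
    exact Finset.prod_congr rfl fun i _ => (ofReal_measureReal (measure_ne_top _ _)).symm
  have hcoord i : Measurable fun z : H => z i :=
    ((continuous_apply i).comp lp.uniformContinuous_coe.continuous).measurable
  have hlim := tendsto_measure_setOf_forall_lt P fun i => hcoord i (hE i)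
  simp only [mem_preimage, hcyl] at hlim
  rw [tendsto_nhds_unique hlim ((ENNReal.continuous_ofReal.tendsto c).comp hprod.tendsto_prod_nat)]
  exact ENNReal.ofReal_pos.2 hc

/-- Every nonempty open subset of `ℓ²` has positive measure under the
Gaussian product measure `P`. -/
theorem gaussMeasure_pos_of_isOpen [MeasurableSpace H] [BorelSpace H]
    (a : ℕ → ℝ) (ha : ∀ i, 0 < a i) (hsa : Summable a) (ha1 : ∑' i, a i < 1)
    (P : Measure H) (hP : IsGaussMeasure a P)
    (O : Set H) (hO : IsOpen O) (hOne : O.Nonempty) :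
    0 < P O := by
  obtain ⟨y, hyO, S, hyS⟩ := lp.exists_mem_forall_notMem_apply_eq_zero (by norm_num) hO hOne
  obtain ⟨ε, hε, hball⟩ := Metric.isOpen_iff.mp hO y hyO
  -- For `i ∉ S` the box below is centred at `0`, where the Gaussian tail bound applies.
  set r : ℕ → ℝ := fun i => ε * √(a i)
  have hr_pos i : 0 < r i := mul_pos hε (sqrt_pos.2 (ha i))
  have hr i : r i ^ 2 = ε ^ 2 * a i := by rw [mul_pow, sq_sqrt (ha i).le]
  have hbox : {z : H | ∀ i, z i ∈ closedBall (y i) (r i)} ⊆ ball y ε := by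
    refine lp.setOf_forall_mem_closedBall_subset_ball y hε.le ?_ ?_
    · simpa only [hr] using hsa.mul_left (ε ^ 2)
    · simpa only [hr, tsum_mul_left] using mul_lt_of_lt_one_right (by positivity) ha1
  have htail i (hi : i ∉ S) : (gauss (a i)).real (closedBall (y i) (r i))ᶜ ≤ 8 / ε ^ 2 * a i := by
    rw [hyS i hi]
    refine (measureReal_gauss_closedBall_zero_compl_le (ha i).ne' (hr_pos i)).trans_eq ?_
    rw [hr]
    field_simp
  have hpos i : 0 < gauss (a i) (closedBall (y i) (r i)) :=
    have := isOpenPosMeasure_gauss (ha i).ne'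
    measure_closedBall_pos _ _ (hr_pos i)
  refine lt_of_lt_of_le ?_ (measure_mono (hbox.trans hball))
  exact hP.measure_setOf_forall_mem_pos (fun i => (ha i).ne') (fun _ => measurableSet_closedBall)
    hpos (.of_norm_bounded_eventually (hsa.mul_left _) (S.eventually_cofinite_notMem.mono
      fun i hi => (norm_of_nonneg measureReal_nonneg).trans_le (htail i hi)))
end
end
end

section
/- Let V ⊆ ℓ² be a pseudo-convex domain with plurisubharmonic exhaustion function η ∈ C^∞_F(V), and set V_τ = {z ∈ V : η(z) ≤ τ} and V°_τ = interior of V_τ. Then: (1) for each τ ∈ ℝ there exists C(τ) > 0 such that |η(z) − η(z')| ≤ C(τ) ||z − z'|| for all z, z' ∈ V_τ; (2) for all τ₁ < τ₂, V_{τ₁} ⊂∘ V°_{τ₂}; (3) for every S ⊂∘ V there exists τ ∈ ℝ with S ⊂∘ V°_τ. -/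
open MeasureTheory Filter Metric Set
open scoped ENNReal NNReal Topology ComplexOrder

noncomputable section


noncomputable section

/-!
Everything rests on a local Lipschitz estimate for `C¹_F` functions: if `B_r(z)` lies in `V` and
`∑ᵢ (|D_{x_i} f|² + |D_{y_i} f|²) ≤ K²` on it, then `|f z' - f z| ≤ K ‖z' - z‖` for `z' ∈ B_r(z)`.
Indeed, for a finite truncation `w` of `z' - z` the continuity of the partial derivatives makes
`t ↦ f (z + t w)` differentiable with derivative `∑ᵢ (Re wᵢ D_{x_i} f + Im wᵢ D_{y_i} f)`, which
Cauchy–Schwarz bounds by `K ‖w‖`; the mean value theorem and `w → z' - z` conclude.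
As a thickening of a set `E ⊂∘ V` is still `⊂∘ V`, the `C¹_F` bounds hold on balls of a fixed
radius around the points of `E`. This gives (1) for nearby points, far-apart points being handled
by the bound on `|η|`; (2) holds because `η` grows by less than `τ₂ - τ₁` on small balls around
`V_{τ₁}`; and (3) because `|η|` is bounded on a thickening of `S`.
-/

theorem HasDerivAt.line_of_shift {E F : Type*} [AddCommGroup E] [Module ℝ E]
    [NormedAddCommGroup F] [NormedSpace ℝ F] {g : E → F} {p w : E} {t : ℝ} {D : F}
    (h : HasDerivAt (fun s : ℝ => g (p + t • w + s • w)) D 0) :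
    HasDerivAt (fun s : ℝ => g (p + s • w)) D t := by
  have := (sub_self t ▸ h).comp_sub_const t t
  simpa only [add_assoc, ← add_smul, add_sub_cancel] using this

theorem norm_sum_smul_le_sqrt_mul_sqrt {ι E : Type*} [SeminormedAddCommGroup E] [NormedSpace ℝ E]
    (s : Finset ι) (a : ι → ℝ) (x : ι → E) :
    ‖∑ i ∈ s, a i • x i‖ ≤ √(∑ i ∈ s, a i ^ 2) * √(∑ i ∈ s, ‖x i‖ ^ 2) :=
  calc ‖∑ i ∈ s, a i • x i‖ ≤ ∑ i ∈ s, |a i| * ‖x i‖ := by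
        simpa only [norm_smul, Real.norm_eq_abs] using norm_sum_le s (fun i => a i • x i)
    _ ≤ √(∑ i ∈ s, |a i| ^ 2) * √(∑ i ∈ s, ‖x i‖ ^ 2) := Real.sum_mul_le_sqrt_mul_sqrt ..
    _ = √(∑ i ∈ s, a i ^ 2) * √(∑ i ∈ s, ‖x i‖ ^ 2) := by simp only [sq_abs]

def realCoord (z : H) (d : Bool × ℕ) : ℝ := if d.1 then (z d.2).re else (z d.2).im

def coordDirs (n : ℕ) : Finset (Bool × ℕ) := Finset.univ ×ˢ Finset.range n

def coordTrunc (z : H) (n : ℕ) : H := ∑ d ∈ coordDirs n, realCoord z d • dir d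

theorem sum_sq_realCoord (z : H) (j : ℕ) : ∑ b : Bool, realCoord z (b, j) ^ 2 = ‖z j‖ ^ 2 := by
  rw [Fintype.sum_bool, Complex.sq_norm, Complex.normSq_apply]
  simp [realCoord, sq]

theorem sum_realCoord_smul_dir (z : H) (j : ℕ) :
    ∑ b : Bool, realCoord z (b, j) • dir (b, j) = lp.single 2 j (z j) := by
  simp only [Fintype.sum_bool, realCoord, dir, if_true, Bool.false_eq_true, if_false,
    ← lp.single_smul, ← lp.single_add, Complex.real_smul, mul_one, Complex.re_add_im]

theorem coordTrunc_eq_sum_single (z : H) (n : ℕ) :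
    coordTrunc z n = ∑ j ∈ Finset.range n, lp.single 2 j (z j) := by
  simp only [coordTrunc, coordDirs, Finset.sum_product_right, sum_realCoord_smul_dir]

theorem tendsto_coordTrunc (z : H) : Tendsto (coordTrunc z) atTop (𝓝 z) := by
  simpa only [← coordTrunc_eq_sum_single] using
    (lp.hasSum_single ENNReal.ofNat_ne_top z).tendsto_sum_nat

theorem norm_coordTrunc (z : H) (n : ℕ) :
    ‖coordTrunc z n‖ = √(∑ d ∈ coordDirs n, realCoord z d ^ 2) := by
  have h := lp.norm_sum_single (p := 2) (by norm_num) (fun j => z j) (Finset.range n)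
  simp only [ENNReal.toReal_ofNat, Real.rpow_two, ← coordTrunc_eq_sum_single] at h
  rw [coordDirs, Finset.sum_product_right]
  simp only [sum_sq_realCoord, ← h, Real.sqrt_sq (norm_nonneg _)]

theorem HasPD.hasDerivAt {v : H} {f : H → ℂ} {p : H} {t : ℝ} (h : HasPD v f (p + t • v)) :
    HasDerivAt (fun s : ℝ => f (p + s • v)) (pder v f (p + t • v)) t :=
  (DifferentiableAt.hasDerivAt h).line_of_shift

open Asymptotics in
theorem hasDerivAt_add_smul_sub {V : Set H} (hV : IsOpen V) {f : H → ℂ} {v m q : H} (c : ℝ)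
    (hq : q ∈ V) (hPD : ∀ p ∈ V, HasPD v f p) (hC : ContinuousAt (pder v f) q) :
    HasDerivAt (fun h : ℝ => f (q + h • m + (h * c) • v) - f (q + h • m))
      (c • pder v f q) 0 := by
  set D := pder v f q
  set γ : ℝ × ℝ → H := fun x => q + x.1 • m + x.2 • v
  have hγ : ContinuousAt γ (0, 0) := by fun_prop
  have hγ0 : γ (0, 0) = q := by simp [γ]
  rw [hasDerivAt_iff_isLittleO]
  refine IsLittleO.trans_isBigO (g := fun h : ℝ => h * c) ?_
    (IsBigO.of_bound |c| (.of_forall fun h => by simp [mul_comm]))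
  rw [isLittleO_iff]
  intro ε hε
  have hgood : ∀ᶠ x in 𝓝 (0 : ℝ) ×ˢ 𝓝 (0 : ℝ), γ x ∈ V ∧ ‖pder v f (γ x) - D‖ ≤ ε := by
    have hnear : ∀ᶠ p in 𝓝 (γ (0, 0)), p ∈ V ∧ ‖pder v f p - D‖ ≤ ε := by
      rw [hγ0]
      filter_upwards [hV.mem_nhds hq, hC.eventually (closedBall_mem_nhds D hε)] with p hp hpD
      exact ⟨hp, by simpa [dist_eq_norm] using hpD⟩
    rw [← nhds_prod_eq]
    exact hγ.eventually hnear
  have hseg := hgood.segment_of_prod_nhds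
    (r := fun h s => γ (h, s) ∈ V ∧ ‖pder v f (γ (h, s)) - D‖ ≤ ε)
    (y := fun _ => 0) (z := fun h : ℝ => h * c) tendsto_const_nhds
    ((continuous_mul_const c).tendsto' 0 0 (zero_mul c))
  filter_upwards [hseg] with h hh
  simp only [segment_eq_uIcc] at hh
  have hderiv : ∀ s ∈ uIcc 0 (h * c), HasDerivWithinAt (fun s : ℝ => f (q + h • m + s • v) - s • D)
      (pder v f (γ (h, s)) - D) (uIcc 0 (h * c)) s := fun s hs => by
    simpa only [one_smul] using ((HasPD.hasDerivAt (p := q + h • m) (hPD _ (hh s hs).1)).fun_sub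
      ((hasDerivAt_id' s).smul_const D)).hasDerivWithinAt
  have := Convex.norm_image_sub_le_of_norm_hasDerivWithin_le hderiv (fun s hs => (hh s hs).2)
    (convex_uIcc _ _) left_mem_uIcc right_mem_uIcc
  rw [sub_right_comm] at this
  simpa [mul_smul, smul_comm h c] using this

theorem hasDerivAt_add_smul_sum {V : Set H} (hV : IsOpen V) {f : H → ℂ} {q : H} (hq : q ∈ V)
    {ι : Type*} (s : Finset ι) (v : ι → H) (a : ι → ℝ) (hPD : ∀ i ∈ s, ∀ p ∈ V, HasPD (v i) f p)
    (hC : ∀ i ∈ s, ContinuousAt (pder (v i) f) q) :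
    HasDerivAt (fun h : ℝ => f (q + h • ∑ i ∈ s, a i • v i))
      (∑ i ∈ s, a i • pder (v i) f q) 0 := by
  classical
  induction s using Finset.induction_on with
  | empty => simpa using hasDerivAt_const (0 : ℝ) (f q)
  | insert i s hi ih =>
    simp only [Finset.forall_mem_insert] at hPD hC
    have hstep := (hasDerivAt_add_smul_sub hV (m := ∑ j ∈ s, a j • v j) (a i) hq hPD.1 hC.1).fun_add
      (ih hPD.2 hC.2)
    simp only [sub_add_cancel] at hstep
    simpa only [Finset.sum_insert hi, smul_add, smul_smul, mul_comm, add_comm, add_left_comm]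
      using hstep

section MemCk

variable {V : Set H} {k : ℕ} {f : H → ℂ}

theorem MemCk.mono (h : MemCk V k f) {W : Set H} (hWV : W ⊆ V) : MemCk W k f :=
  ⟨fun L hL => (h.1 L hL).mono hWV, fun L hL d z hz => h.2 L hL d z (hWV hz)⟩

theorem MemCk.continuousOn (h : MemCk V k f) : ContinuousOn f V := h.1 [] (Nat.zero_le k)

theorem MemCk.hasPD (h : MemCk V (k + 1) f) (d : Bool × ℕ) {z : H} (hz : z ∈ V) :
    HasPD (dir d) f z :=
  h.2 [] k.succ_pos d z hz

theorem MemCk.continuousOn_coordD (h : MemCk V (k + 1) f) (d : Bool × ℕ) :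
    ContinuousOn (coordD d f) V :=
  h.1 [d] (Nat.le_add_left 1 k)

end MemCk

theorem norm_sub_le_of_mem_ball {f : H → ℂ} {z z' : H} {r K : ℝ} (hf : MemCk (ball z r) 1 f)
    (hK0 : 0 ≤ K) (hK : ∀ w ∈ ball z r, ∀ n, ∑ d ∈ coordDirs n, ‖coordD d f w‖ ^ 2 ≤ K ^ 2)
    (hz' : z' ∈ ball z r) : ‖f z' - f z‖ ≤ K * ‖z' - z‖ := by
  set g := z' - z
  have htrunc : Tendsto (fun n => z + coordTrunc g n) atTop (𝓝 z') := by
    simpa [g] using (tendsto_coordTrunc g).const_add z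
  have hlim : Tendsto (fun n => ‖f (z + coordTrunc g n) - f z‖) atTop (𝓝 ‖f z' - f z‖) :=
    (((hf.continuousOn.continuousAt (isOpen_ball.mem_nhds hz')).tendsto.comp htrunc).sub_const
      (f z)).norm
  have hsmall : ∀ᶠ n in atTop, ‖coordTrunc g n‖ < r :=
    (tendsto_coordTrunc g).norm.eventually (gt_mem_nhds (by simpa [dist_eq_norm] using hz'))
  refine le_of_tendsto_of_tendsto hlim ((tendsto_coordTrunc g).norm.const_mul K) ?_
  filter_upwards [hsmall] with n hn
  set w := coordTrunc g n
  have hseg : ∀ t ∈ Icc (0 : ℝ) 1, z + t • w ∈ ball z r := fun t ht => by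
    rw [mem_ball, dist_eq_norm, add_sub_cancel_left, norm_smul, Real.norm_of_nonneg ht.1]
    exact (mul_le_of_le_one_left (norm_nonneg w) ht.2).trans_lt hn
  have hderiv : ∀ t ∈ Icc (0 : ℝ) 1, HasDerivWithinAt (fun t : ℝ => f (z + t • w))
      (∑ d ∈ coordDirs n, realCoord g d • pder (dir d) f (z + t • w)) (Icc 0 1) t :=
    fun t ht => (hasDerivAt_add_smul_sum isOpen_ball (hseg t ht) (coordDirs n) dir (realCoord g)
      (fun d _ p hp => hf.hasPD d hp) (fun d _ => (hf.continuousOn_coordD d).continuousAt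
        (isOpen_ball.mem_nhds (hseg t ht)))).line_of_shift.hasDerivWithinAt
  have hbound : ∀ t ∈ Icc (0 : ℝ) 1,
      ‖∑ d ∈ coordDirs n, realCoord g d • pder (dir d) f (z + t • w)‖ ≤ K * ‖w‖ := fun t ht =>
    calc _ ≤ ‖w‖ * √(∑ d ∈ coordDirs n, ‖pder (dir d) f (z + t • w)‖ ^ 2) := by
          rw [norm_coordTrunc]
          exact norm_sum_smul_le_sqrt_mul_sqrt _ _ _
      _ ≤ ‖w‖ * K := by
          gcongr
          exact (Real.sqrt_le_left hK0).2 (hK _ (hseg t ht) n)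
      _ = K * ‖w‖ := mul_comm _ _
  simpa using (convex_Icc (0 : ℝ) 1).norm_image_sub_le_of_norm_hasDerivWithin_le hderiv hbound
    (left_mem_Icc.2 zero_le_one) (right_mem_Icc.2 zero_le_one)

section UnifIncl

variable {S V : Set H}

theorem UnifIncl.subset (h : UnifIncl S V) : S ⊆ V := by
  obtain ⟨r, -, hr, -, hball, -⟩ := h
  exact fun z hz => hball z hz (mem_ball_self hr)

theorem UnifIncl.exists_thickening (h : UnifIncl S V) : ∃ r > 0, UnifIncl (thickening r S) V := by
  obtain ⟨r, R, hr, hR, hball, hbd⟩ := h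
  refine ⟨r / 2, by positivity, r / 2, R + r / 2, by positivity, by positivity, ?_, ?_⟩ <;>
    intro x hx <;> obtain ⟨z, hz, hxz⟩ := mem_thickening_iff.1 hx
  · exact (ball_subset_ball' (by linarith)).trans (hball z hz)
  · have := mem_ball.1 (hbd hz)
    rw [mem_ball]
    linarith [dist_triangle x z 0]

theorem UnifIncl.unifIncl_interior (h : UnifIncl S V) {W : Set H} {ρ : ℝ} (hρ : 0 < ρ)
    (hW : ∀ z ∈ S, ball z ρ ⊆ W) : UnifIncl S (interior W) := by
  obtain ⟨-, R, -, hR, -, hbd⟩ := h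
  exact ⟨ρ, R, hρ, hR, fun z hz => interior_maximal (hW z hz) isOpen_ball, hbd⟩

end UnifIncl

theorem FBound.exists_bound {V : Set H} {f : H → ℂ} (h : FBound V f) {E : Set H}
    (hE : UnifIncl E V) :
    ∃ M, 0 ≤ M ∧ ∀ z ∈ E, ‖f z‖ ≤ M ∧ ∀ n, ∑ d ∈ coordDirs n, ‖coordD d f z‖ ^ 2 ≤ M := by
  obtain ⟨M, hM⟩ := h E hE
  refine ⟨max M 0, le_max_right M 0, fun z hz => ⟨?_, fun n => ?_⟩⟩ <;>
    rw [← ENNReal.ofReal_le_ofReal_iff (le_max_right M 0), ENNReal.ofReal_max,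
      ENNReal.ofReal_zero, max_eq_left zero_le]
  · exact le_self_add.trans (hM z hz)
  · refine le_trans ?_ (le_add_self.trans (hM z hz))
    rw [ENNReal.ofReal_sum_of_nonneg (fun _ _ => sq_nonneg _), coordDirs,
      Finset.sum_product_right]
    exact (Finset.sum_le_sum fun j _ => (Fintype.sum_bool _).le).trans (ENNReal.sum_le_tsum _)

theorem exists_lipschitz_near_of_unifIncl {V S : Set H} {f : H → ℂ} (hf : MemCk V 1 f)
    (hFB : FBound V f) (hS : UnifIncl S V) :
    ∃ r > 0, ∃ K ≥ 0, ∀ z ∈ S, ball z r ⊆ V ∧ ∀ z' ∈ ball z r, ‖f z' - f z‖ ≤ K * ‖z' - z‖ := by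
  obtain ⟨r, hr, hT⟩ := hS.exists_thickening
  obtain ⟨M, hM0, hM⟩ := hFB.exists_bound hT
  refine ⟨r, hr, √M, Real.sqrt_nonneg M, fun z hz => ?_⟩
  have hball : ball z r ⊆ thickening r S := ball_subset_thickening hz r
  refine ⟨hball.trans hT.subset, fun z' hz' => norm_sub_le_of_mem_ball
    (hf.mono (hball.trans hT.subset)) (Real.sqrt_nonneg M) (fun w hw n => ?_) hz'⟩
  rw [Real.sq_sqrt hM0]
  exact (hM w (hball hw)).2 n

theorem exists_lipschitzOn_of_unifIncl {V S : Set H} {f : H → ℂ} (hf : MemCk V 1 f)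
    (hFB : FBound V f) (hS : UnifIncl S V) :
    ∃ C > 0, ∀ z ∈ S, ∀ z' ∈ S, ‖f z - f z'‖ ≤ C * ‖z - z'‖ := by
  obtain ⟨r, hr, K, hK, hnear⟩ := exists_lipschitz_near_of_unifIncl hf hFB hS
  obtain ⟨M, hM0, hM⟩ := hFB.exists_bound hS
  refine ⟨K + 2 * M / r + 1, by positivity, fun z hz z' hz' => ?_⟩
  rcases lt_or_ge ‖z - z'‖ r with hclose | hfar
  · calc ‖f z - f z'‖ ≤ K * ‖z - z'‖ :=
          (hnear z' hz').2 z (by rwa [mem_ball, dist_eq_norm])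
      _ ≤ (K + 2 * M / r + 1) * ‖z - z'‖ := by gcongr; linarith [show 0 ≤ 2 * M / r by positivity]
  · calc ‖f z - f z'‖ ≤ 2 * M := (norm_sub_le _ _).trans (by linarith [(hM z hz).1, (hM z' hz').1])
      _ = 2 * M / r * r := by field_simp
      _ ≤ (K + 2 * M / r + 1) * ‖z - z'‖ := by gcongr; linarith

theorem norm_cplx (η : H → ℝ) (z : H) : ‖cplx η z‖ = |η z| := Complex.norm_real _

theorem norm_cplx_sub (η : H → ℝ) (z z' : H) : ‖cplx η z - cplx η z'‖ = |η z - η z'| := by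
  rw [cplx, cplx, ← Complex.ofReal_sub, Complex.norm_real, Real.norm_eq_abs]

theorem unifIncl_interior_sublevel_of_lt {V : Set H} {η : H → ℝ} (hf : MemCk V 1 (cplx η))
    (hFB : FBound V (cplx η)) {τ₁ τ₂ : ℝ} (hS : UnifIncl {z | z ∈ V ∧ η z ≤ τ₁} V)
    (hτ : τ₁ < τ₂) : UnifIncl {z | z ∈ V ∧ η z ≤ τ₁} (interior {z | z ∈ V ∧ η z ≤ τ₂}) := by
  obtain ⟨r, hr, K, hK, hnear⟩ := exists_lipschitz_near_of_unifIncl hf hFB hS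
  set ρ := min r ((τ₂ - τ₁) / (K + 1))
  have hρ : 0 < ρ := lt_min hr (div_pos (by linarith) (by linarith))
  refine hS.unifIncl_interior hρ fun z hz y hy => ?_
  have hyr : y ∈ ball z r := ball_subset_ball (min_le_left _ _) hy
  have hyz : ‖y - z‖ < ρ := by rwa [mem_ball, dist_eq_norm] at hy
  have hLip : |η y - η z| ≤ K * ‖y - z‖ := norm_cplx_sub η y z ▸ (hnear z hz).2 y hyr
  have hgap : (K + 1) * ρ ≤ τ₂ - τ₁ := by
    rw [← le_div_iff₀' (by linarith)]
    exact min_le_right _ _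
  refine ⟨(hnear z hz).1 hyr, ?_⟩
  nlinarith [le_abs_self (η y - η z), norm_nonneg (y - z), hz.2]

theorem FBound.exists_unifIncl_interior_sublevel {V S : Set H} {η : H → ℝ}
    (hFB : FBound V (cplx η)) (hS : UnifIncl S V) :
    ∃ τ, UnifIncl S (interior {z | z ∈ V ∧ η z ≤ τ}) := by
  obtain ⟨r, hr, hT⟩ := hS.exists_thickening
  obtain ⟨M, -, hM⟩ := hFB.exists_bound hT
  refine ⟨M, hS.unifIncl_interior hr fun z hz y hy => ?_⟩
  have hyT : y ∈ thickening r S := ball_subset_thickening hz r hy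
  exact ⟨hT.subset hyT, (le_abs_self _).trans (norm_cplx η y ▸ (hM y hyT).1)⟩

theorem pseudoconvex_sublevel_properties_general
    (V : Set H)
    (η : H → ℝ) (hη : IsPSHExhaustion V η) :
    (∀ τ : ℝ, ∃ C : ℝ, 0 < C ∧
        ∀ z ∈ {z | z ∈ V ∧ η z ≤ τ}, ∀ z' ∈ {z | z ∈ V ∧ η z ≤ τ},
          |η z - η z'| ≤ C * ‖z - z'‖) ∧
    (∀ τ₁ τ₂ : ℝ, τ₁ < τ₂ →
        UnifIncl {z | z ∈ V ∧ η z ≤ τ₁} (interior {z | z ∈ V ∧ η z ≤ τ₂})) ∧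
    (∀ S : Set H, UnifIncl S V →
        ∃ τ : ℝ, UnifIncl S (interior {z | z ∈ V ∧ η z ≤ τ})) := by
  obtain ⟨hsmooth, hFB, hexh, -⟩ := hη
  have hC1 : MemCk V 1 (cplx η) := hsmooth 1
  refine ⟨fun τ => ?_, fun τ₁ τ₂ hτ => unifIncl_interior_sublevel_of_lt hC1 hFB (hexh τ₁) hτ,
    fun S hS => hFB.exists_unifIncl_interior_sublevel hS⟩
  obtain ⟨C, hC, hLip⟩ := exists_lipschitzOn_of_unifIncl hC1 hFB (hexh τ)
  exact ⟨C, hC, fun z hz z' hz' => norm_cplx_sub η z z' ▸ hLip z hz z' hz'⟩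

/-- Elementary properties of a pseudo-convex domain `V` and a
plurisubharmonic exhaustion function `η` of `V`, with `V_τ = {z ∈ V : η z ≤ τ}` and
`V°_τ = interior (V_τ)`: (1) `η` is Lipschitz on each `V_τ`; (2) `V_{τ₁} ⊂∘ V°_{τ₂}`
whenever `τ₁ < τ₂`; (3) every `S ⊂∘ V` satisfies `S ⊂∘ V°_τ` for some `τ`. -/
theorem pseudoconvex_sublevel_properties
    (V : Set H) (hVo : IsOpen V) (hVne : V.Nonempty)
    (η : H → ℝ) (hη : IsPSHExhaustion V η) :
    (∀ τ : ℝ, ∃ C : ℝ, 0 < C ∧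
        ∀ z ∈ {z | z ∈ V ∧ η z ≤ τ}, ∀ z' ∈ {z | z ∈ V ∧ η z ≤ τ},
          |η z - η z'| ≤ C * ‖z - z'‖) ∧
    (∀ τ₁ τ₂ : ℝ, τ₁ < τ₂ →
        UnifIncl {z | z ∈ V ∧ η z ≤ τ₁} (interior {z | z ∈ V ∧ η z ≤ τ₂})) ∧
    (∀ S : Set H, UnifIncl S V →
        ∃ τ : ℝ, UnifIncl S (interior {z | z ∈ V ∧ η z ≤ τ})) :=
  pseudoconvex_sublevel_properties_general V η hη
end
end
end

section
/- Let g₀ be a non-decreasing nonnegative real-valued function on [0, +∞). Then there exists a function g on [0, +∞) which is convex, increasing, and real analytic (given on all of ℝ by an everywhere-convergent power series with nonnegative coefficients), such that g''(x) ≥ g'(x) ≥ g(x) ≥ g₀(x) for all x ∈ [0, +∞). -/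
/-!
Look for `g x = ∑ aₙ xⁿ / n!` with `(aₙ)` nonnegative and nondecreasing. Then
`g' x = ∑ aₙ₊₁ xⁿ / n!` dominates `g` termwise on `[0, ∞)`, and so does `g''` dominate `g'`;
monotonicity and convexity come from the nonnegativity of the coefficients. It remains to have
`g ≥ c m` on `[m, ∞)` for `c m = |g₀ (m + 1)|`. Take `aₙ = ∑_{N m ≤ n} c m * (N m)! / m ^ N m`, so
that `g x = ∑ₘ c m * (N m)! / m ^ N m * ∑_{n ≥ N m} xⁿ / n!`. The `m`-th piece is at least
`c m * (x / m) ^ N m ≥ c m` for `x ≥ m`, and at most `c m * (x / m) ^ N m * eˣ`; since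
`2 ^ (N m - m) ≥ c m`, the latter is at most `2⁻ᵐ eˣ` once `m ≥ 2x`, so the series converges.
-/

open Filter Metric Set Finset
open scoped Nat

noncomputable section

def egf (a : ℕ → ℝ) (x : ℝ) : ℝ := ∑' n, a n * x ^ n / n !

section Egf

variable {a : ℕ → ℝ}

theorem summable_egf_of_nonneg (ha : ∀ n, 0 ≤ a n)
    (hs : ∀ x, 0 ≤ x → Summable fun n => a n * x ^ n / n !) (x : ℝ) :
    Summable fun n => a n * x ^ n / n ! :=
  (hs |x| (abs_nonneg x)).of_norm_bounded fun n => by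
    rw [Real.norm_eq_abs, abs_div, abs_mul, abs_pow, abs_of_nonneg (ha n), Nat.abs_cast]

theorem succ_mul_pow_le_two_mul_pow {x y : ℝ} (hx : 0 ≤ x) (hxy : x ≤ y) (hy : 1 ≤ y) (n : ℕ) :
    (n + 1) * x ^ n ≤ (2 * y) ^ (n + 1) := by
  rw [mul_pow]
  refine mul_le_mul ?_ ((pow_le_pow_left₀ hx hxy n).trans (pow_le_pow_right₀ hy n.le_succ))
    (by positivity) (by positivity)
  exact_mod_cast (Nat.lt_two_pow_self (n := n + 1)).le

theorem summable_egf_succ (ha : ∀ n, 0 ≤ a n)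
    (hs : ∀ x, 0 ≤ x → Summable fun n => a n * x ^ n / n !) {x : ℝ} (hx : 0 ≤ x) :
    Summable fun n => a (n + 1) * x ^ n / n ! := by
  have hy : 0 ≤ 2 * max x 1 := by positivity
  refine .of_nonneg_of_le (fun n => by have := ha (n + 1); positivity) (fun n => ?_)
    ((summable_nat_add_iff 1).2 (hs _ hy))
  calc a (n + 1) * x ^ n / n ! = a (n + 1) * ((n + 1) * x ^ n) / (n + 1)! := by
        rw [Nat.factorial_succ]; push_cast; field_simp
    _ ≤ a (n + 1) * (2 * max x 1) ^ (n + 1) / (n + 1)! := by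
        gcongr
        exacts [ha _, succ_mul_pow_le_two_mul_pow hx (le_max_left _ _) (le_max_right _ _) n]

theorem hasDerivAt_egf (ha : ∀ n, 0 ≤ a n)
    (hs : ∀ x, 0 ≤ x → Summable fun n => a n * x ^ n / n !) (x : ℝ) :
    HasDerivAt (egf a) (egf (fun n => a (n + 1)) x) x := by
  have hsplit : egf a = fun y => a 0 + ∑' n, a (n + 1) * y ^ (n + 1) / (n + 1)! := by
    funext y
    simp [egf, (summable_egf_of_nonneg ha hs y).tsum_eq_zero_add]
  have hterm (n : ℕ) (y : ℝ) :
      HasDerivAt (fun z => a (n + 1) * z ^ (n + 1) / (n + 1)!) (a (n + 1) * y ^ n / n !) y := by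
    refine (((hasDerivAt_pow (n + 1) y).const_mul (a (n + 1))).div_const
      ((n + 1)! : ℝ)).congr_deriv ?_
    rw [Nat.factorial_succ, Nat.add_sub_cancel]; push_cast; field_simp
  set R := |x| + 1
  have hbound (n : ℕ) (y : ℝ) (hy : y ∈ ball 0 R) :
      ‖a (n + 1) * y ^ n / (n ! : ℝ)‖ ≤ a (n + 1) * R ^ n / n ! := by
    rw [mem_ball_zero_iff, Real.norm_eq_abs] at hy
    rw [Real.norm_eq_abs, abs_div, abs_mul, abs_pow, abs_of_nonneg (ha _), Nat.abs_cast]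
    gcongr
    exact ha _
  rw [hsplit]
  refine (hasDerivAt_tsum_of_isPreconnected (summable_egf_succ ha hs (by positivity)) isOpen_ball
    (convex_ball 0 R).isPreconnected (fun n y _ => hterm n y) hbound (mem_ball_self (by positivity))
    (by simp) ?_).const_add (a 0)
  rw [mem_ball_zero_iff, Real.norm_eq_abs]
  linarith

theorem deriv_egf (ha : ∀ n, 0 ≤ a n)
    (hs : ∀ x, 0 ≤ x → Summable fun n => a n * x ^ n / n !) :
    deriv (egf a) = egf fun n => a (n + 1) :=
  funext fun x => (hasDerivAt_egf ha hs x).deriv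

theorem hasSum_egf (ha : ∀ n, 0 ≤ a n)
    (hs : ∀ x, 0 ≤ x → Summable fun n => a n * x ^ n / n !) (x : ℝ) :
    HasSum (fun n => a n / n ! * x ^ n) (egf a x) := by
  simpa only [egf, div_mul_eq_mul_div] using (summable_egf_of_nonneg ha hs x).hasSum

theorem egf_le_egf {b : ℕ → ℝ} (ha : ∀ n, 0 ≤ a n) (hab : ∀ n, a n ≤ b n) {x : ℝ} (hx : 0 ≤ x)
    (hb : Summable fun n => b n * x ^ n / n !) : egf a x ≤ egf b x := by
  have hle (n : ℕ) : a n * x ^ n / n ! ≤ b n * x ^ n / n ! := by gcongr; exact hab n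
  exact (hb.of_nonneg_of_le (fun n => by have := ha n; positivity) hle).tsum_le_tsum hle hb

theorem monotoneOn_egf (ha : ∀ n, 0 ≤ a n)
    (hs : ∀ x, 0 ≤ x → Summable fun n => a n * x ^ n / n !) : MonotoneOn (egf a) (Ici 0) :=
  fun x hx y hy hxy => (hs x hx).tsum_le_tsum (fun n => by gcongr; exact ha n) (hs y hy)

theorem convexOn_egf (ha : ∀ n, 0 ≤ a n)
    (hs : ∀ x, 0 ≤ x → Summable fun n => a n * x ^ n / n !) : ConvexOn ℝ (Ici 0) (egf a) := by
  have hdiff : Differentiable ℝ (egf a) := fun x => (hasDerivAt_egf ha hs x).differentiableAt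
  refine MonotoneOn.convexOn_of_deriv (convex_Ici 0) hdiff.continuous.continuousOn
    hdiff.differentiableOn ?_
  rw [deriv_egf ha hs, interior_Ici]
  exact (monotoneOn_egf (fun n => ha (n + 1)) fun x hx => summable_egf_succ ha hs hx).mono
    Ioi_subset_Ici_self

theorem egf_le_deriv_egf (ha : ∀ n, 0 ≤ a n) (hmono : Monotone a)
    (hs : ∀ x, 0 ≤ x → Summable fun n => a n * x ^ n / n !) {x : ℝ} (hx : 0 ≤ x) :
    egf a x ≤ deriv (egf a) x := by
  rw [deriv_egf ha hs]
  exact egf_le_egf ha (fun n => hmono n.le_succ) hx (summable_egf_succ ha hs hx)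

end Egf

theorem sum_Ico_pow_div_factorial_le {x : ℝ} (hx : 0 ≤ x) (N K : ℕ) :
    ∑ n ∈ Ico N K, x ^ n / n ! ≤ x ^ N / N ! * Real.exp x := by
  have hterm (j : ℕ) : x ^ (N + j) / (N + j)! ≤ x ^ N / N ! * (x ^ j / j !) := by
    rw [pow_add, div_mul_div_comm]
    gcongr
    exact_mod_cast Nat.le_of_dvd (Nat.factorial_pos _)
      (Nat.factorial_mul_factorial_dvd_factorial_add N j)
  calc ∑ n ∈ Ico N K, x ^ n / n !
      ≤ ∑ j ∈ range (K - N), x ^ N / N ! * (x ^ j / j !) := by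
        rw [sum_Ico_eq_sum_range]; exact sum_le_sum fun j _ => hterm j
    _ ≤ x ^ N / N ! * Real.exp x := by
        rw [← mul_sum]; gcongr; exact Real.sum_le_exp_of_nonneg hx _

namespace EgfMajorant

variable (c : ℕ → ℝ)

/-- Vanishes at `m = 0`, which makes the `m = 0` piece the constant `c 0` whatever `x / 0` is. -/
def exponent (m : ℕ) : ℕ := m * (⌈c m⌉₊ + 1)

def coeff (m : ℕ) : ℝ := c m * (exponent c m)! / m ^ exponent c m

def seq (n : ℕ) : ℝ := ∑ m ∈ range (n + 1) with exponent c m ≤ n, coeff c m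

variable {c}

theorem le_exponent (m : ℕ) : m ≤ exponent c m := Nat.le_mul_of_pos_right m (Nat.succ_pos _)

theorem coeff_nonneg (hc : ∀ m, 0 ≤ c m) (m : ℕ) : 0 ≤ coeff c m := by
  have := hc m; unfold coeff; positivity

theorem coeff_mul_pow_div_factorial (m : ℕ) (x : ℝ) :
    coeff c m * (x ^ exponent c m / (exponent c m)!) = c m * (x / m) ^ exponent c m := by
  unfold coeff; rw [div_pow]; field_simp

theorem seq_nonneg (hc : ∀ m, 0 ≤ c m) (n : ℕ) : 0 ≤ seq c n :=
  sum_nonneg fun m _ => coeff_nonneg hc m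

theorem seq_mono (hc : ∀ m, 0 ≤ c m) : Monotone (seq c) :=
  monotone_nat_of_le_succ fun n => sum_le_sum_of_subset_of_nonneg
    (fun m => by simp only [mem_filter, Finset.mem_range]; omega) fun m _ _ => coeff_nonneg hc m

theorem coeff_le_seq_exponent (hc : ∀ m, 0 ≤ c m) (m : ℕ) : coeff c m ≤ seq c (exponent c m) :=
  single_le_sum (fun k _ => coeff_nonneg hc k)
    (mem_filter.2 ⟨Finset.mem_range.2 (Nat.lt_succ_of_le (le_exponent m)), le_rfl⟩)

theorem sum_range_seq_mul (t : ℕ → ℝ) (K : ℕ) :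
    ∑ n ∈ range K, seq c n * t n = ∑ m ∈ range K, coeff c m * ∑ n ∈ Ico (exponent c m) K, t n := by
  simp only [seq, sum_mul, mul_sum]
  refine sum_comm' fun n m => ?_
  have := le_exponent (c := c) m
  simp only [mem_filter, Finset.mem_range, Finset.mem_Ico]
  omega

theorem mul_div_pow_exponent_le (hc : ∀ m, 0 ≤ c m) {x : ℝ} (hx : 0 ≤ x) {m : ℕ}
    (hm : 1 ≤ m) (hxm : 2 * x ≤ m) : c m * (x / m) ^ exponent c m ≤ (1 / 2) ^ m := by
  have hhalf : x / m ≤ 1 / 2 := by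
    rw [div_le_iff₀ (by exact_mod_cast hm)]; linarith
  have hexp : m + ⌈c m⌉₊ ≤ exponent c m := by
    unfold exponent; nlinarith
  have hc2 : c m ≤ 2 ^ ⌈c m⌉₊ :=
    (Nat.le_ceil _).trans (by exact_mod_cast (Nat.lt_two_pow_self).le)
  calc c m * (x / m) ^ exponent c m ≤ c m * (1 / 2) ^ (m + ⌈c m⌉₊) := by
        have := hc m
        gcongr
        exact (pow_le_pow_left₀ (by positivity) hhalf _).trans (pow_le_pow_of_le_one
          (by norm_num) (by norm_num) hexp)
    _ = c m / 2 ^ ⌈c m⌉₊ * (1 / 2) ^ m := by rw [pow_add, one_div_pow 2 ⌈c m⌉₊]; ring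
    _ ≤ (1 / 2) ^ m :=
        mul_le_of_le_one_left (by positivity) ((div_le_one (by positivity)).2 hc2)

theorem summable_mul_div_pow_exponent (hc : ∀ m, 0 ≤ c m) {x : ℝ} (hx : 0 ≤ x) :
    Summable fun m : ℕ => c m * (x / m) ^ exponent c m := by
  refine summable_geometric_two.of_norm_bounded_eventually ?_
  rw [Nat.cofinite_eq_atTop, eventually_atTop]
  refine ⟨⌈2 * x⌉₊ + 1, fun m hm => ?_⟩
  have := hc m
  rw [Real.norm_of_nonneg (by positivity)]
  refine mul_div_pow_exponent_le hc hx (by omega) ((Nat.le_ceil _).trans ?_)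
  exact_mod_cast (Nat.le_succ _).trans hm

theorem summable_egf_seq (hc : ∀ m, 0 ≤ c m) {x : ℝ} (hx : 0 ≤ x) :
    Summable fun n => seq c n * x ^ n / n ! := by
  refine summable_of_sum_range_le (c := (∑' m : ℕ, c m * (x / m) ^ exponent c m) * Real.exp x)
    (fun n => by have := seq_nonneg hc n; positivity) fun K => ?_
  calc ∑ n ∈ range K, seq c n * x ^ n / n !
      = ∑ m ∈ range K, coeff c m * ∑ n ∈ Ico (exponent c m) K, x ^ n / n ! := by
        simp only [mul_div_assoc, sum_range_seq_mul]
    _ ≤ ∑ m ∈ range K, c m * (x / m) ^ exponent c m * Real.exp x := by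
        refine sum_le_sum fun m _ => ?_
        rw [← coeff_mul_pow_div_factorial, mul_assoc]
        exact mul_le_mul_of_nonneg_left (sum_Ico_pow_div_factorial_le hx _ _) (coeff_nonneg hc m)
    _ ≤ (∑' m : ℕ, c m * (x / m) ^ exponent c m) * Real.exp x := by
        rw [← sum_mul]
        gcongr
        exact (summable_mul_div_pow_exponent hc hx).sum_le_tsum _
          fun m _ => by have := hc m; positivity

theorem le_egf_seq (hc : ∀ m, 0 ≤ c m) {m : ℕ} {x : ℝ} (hmx : m ≤ x) : c m ≤ egf (seq c) x := by
  have hx : 0 ≤ x := (Nat.cast_nonneg m).trans hmx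
  have hpow : 1 ≤ (x / m) ^ exponent c m := by
    rcases eq_or_ne m 0 with rfl | hm
    · simp [exponent]
    · exact one_le_pow₀ ((one_le_div (by positivity)).2 hmx)
  calc c m ≤ c m * (x / m) ^ exponent c m := le_mul_of_one_le_right (hc m) hpow
    _ = coeff c m * (x ^ exponent c m / (exponent c m)!) := (coeff_mul_pow_div_factorial m x).symm
    _ ≤ seq c (exponent c m) * x ^ exponent c m / (exponent c m)! := by
        rw [← mul_div_assoc]; gcongr; exact coeff_le_seq_exponent hc m
    _ ≤ egf (seq c) x := (summable_egf_seq hc hx).le_tsum _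
          fun n _ => by have := seq_nonneg hc n; positivity

end EgfMajorant

theorem exists_monotone_egf_ge (c : ℕ → ℝ) :
    ∃ a : ℕ → ℝ, (∀ n, 0 ≤ a n) ∧ Monotone a ∧
      (∀ x, 0 ≤ x → Summable fun n => a n * x ^ n / n !) ∧
      ∀ (m : ℕ) (x : ℝ), m ≤ x → c m ≤ egf a x := by
  have habs : ∀ m, 0 ≤ |c m| := fun m => abs_nonneg _
  exact ⟨EgfMajorant.seq (|c ·|), EgfMajorant.seq_nonneg habs, EgfMajorant.seq_mono habs,
    fun x hx => EgfMajorant.summable_egf_seq habs hx,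
    fun m x hmx => (le_abs_self _).trans (EgfMajorant.le_egf_seq habs hmx)⟩

theorem exists_analytic_convex_majorant_general
    (g₀ : ℝ → ℝ) (hmono : MonotoneOn g₀ (Set.Ici 0)) :
    ∃ (b : ℕ → ℝ) (g : ℝ → ℝ),
      (∀ n, 0 ≤ b n) ∧
      (∀ x : ℝ, HasSum (fun n => b n * x ^ n) (g x)) ∧
      ConvexOn ℝ (Set.Ici 0) g ∧
      MonotoneOn g (Set.Ici 0) ∧
      ∀ x : ℝ, 0 ≤ x →
        g₀ x ≤ g x ∧ g x ≤ deriv g x ∧ deriv g x ≤ deriv (deriv g) x := by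
  obtain ⟨a, ha, ha_mono, hs, hge⟩ := exists_monotone_egf_ge fun m => g₀ (m + 1)
  refine ⟨fun n => a n / n !, egf a, fun n => div_nonneg (ha n) (Nat.cast_nonneg _),
    hasSum_egf ha hs, convexOn_egf ha hs, monotoneOn_egf ha hs,
    fun x hx => ⟨?_, egf_le_deriv_egf ha ha_mono hs hx, ?_⟩⟩
  · calc g₀ x ≤ g₀ (⌊x⌋₊ + 1) :=
          hmono hx (mem_Ici.2 (by positivity)) (Nat.lt_floor_add_one x).le
      _ ≤ egf a x := by exact_mod_cast hge _ _ (Nat.floor_le hx)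
  · rw [deriv_egf ha hs]
    exact egf_le_deriv_egf (fun n => ha (n + 1)) (fun m n hmn => ha_mono (by omega))
      (fun y hy => summable_egf_succ ha hs hy) hx

/-- Every non-decreasing nonnegative function `g₀` on `[0,∞)` is dominated
by a convex, increasing function `g` given on all of `ℝ` by an everywhere-convergent power
series with nonnegative coefficients, satisfying `g'' ≥ g' ≥ g ≥ g₀` on `[0,∞)`. -/
theorem exists_analytic_convex_majorant
    (g₀ : ℝ → ℝ) (hmono : MonotoneOn g₀ (Set.Ici 0)) (hpos : ∀ x, 0 ≤ x → 0 ≤ g₀ x) :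
    ∃ (b : ℕ → ℝ) (g : ℝ → ℝ),
      (∀ n, 0 ≤ b n) ∧
      (∀ x : ℝ, HasSum (fun n => b n * x ^ n) (g x)) ∧
      ConvexOn ℝ (Set.Ici 0) g ∧
      MonotoneOn g (Set.Ici 0) ∧
      ∀ x : ℝ, 0 ≤ x →
        g₀ x ≤ g x ∧ g x ≤ deriv g x ∧ deriv g x ≤ deriv (deriv g) x :=
  exists_analytic_convex_majorant_general g₀ hmono
end
end

section
/- Let 0 < x₁ < x₂ < +∞ and let g be a non-decreasing real-valued function on [0, +∞) with g(x) = 0 for all x ∈ [0, x₂]. Then there exists G ∈ C²(ℝ) such that G(x) = 0 for all x ≤ x₁, G''(x) ≥ 0 for all x ∈ [0, +∞), and G(x) ≥ g(x) and G'(x) ≥ g(x) for all x ∈ [0, +∞). -/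
open MeasureTheory Filter Metric Set
open scoped ENNReal NNReal Topology ComplexOrder

noncomputable section

/-- If `0 < x₁ < x₂` and `g` is non-decreasing on `[0,∞)` and vanishes on
`[0, x₂]`, there is `G ∈ C²(ℝ)` vanishing for `x ≤ x₁`, with `G'' ≥ 0` on `[0,∞)`, and with
`G ≥ g` and `G' ≥ g` on `[0,∞)`. -/
theorem exists_C2_convex_majorant
    (x₁ x₂ : ℝ) (hx₁ : 0 < x₁) (hx₁₂ : x₁ < x₂)
    (g : ℝ → ℝ) (hmono : MonotoneOn g (Set.Ici 0))
    (hzero : ∀ x, 0 ≤ x → x ≤ x₂ → g x = 0) :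
    ∃ G : ℝ → ℝ, ContDiff ℝ 2 G ∧
      (∀ x ≤ x₁, G x = 0) ∧
      (∀ x, 0 ≤ x → 0 ≤ deriv (deriv G) x) ∧
      (∀ x, 0 ≤ x → g x ≤ G x ∧ g x ≤ deriv G x) := by
  have hx₂0 : (0:ℝ) ≤ x₂ := (hx₁.trans hx₁₂).le
  set ε : ℝ := min ((x₂ - x₁)/4) 1 with hεdef
  have hε : 0 < ε := lt_min (by linarith) one_pos
  have hε1 : ε ≤ 1 := min_le_right _ _
  have h4ε : x₁ + 4*ε ≤ x₂ := by
    have h : ε ≤ (x₂ - x₁)/4 := min_le_left _ _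
    linarith
  -- the modified monotone function
  set f : ℝ → ℝ := fun s => max (g (max s x₂)) 0 with hfdef
  have hfmono : Monotone f := by
    intro a b hab
    exact max_le_max (hmono (le_trans hx₂0 (le_max_right _ _))
      (le_trans hx₂0 (le_max_right _ _)) (max_le_max hab le_rfl)) le_rfl
  have hfnn : ∀ s, 0 ≤ f s := fun s => le_max_right _ _
  have hfzero : ∀ s, s ≤ x₂ → f s = 0 := by
    intro s hs
    simp only [hfdef]
    rw [max_eq_right hs, hzero x₂ hx₂0 le_rfl, max_self]
  have hgf : ∀ s, 0 ≤ s → g s ≤ f s := by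
    intro s hs
    rcases le_total s x₂ with h | h
    · rw [hzero s hs h]; exact hfnn s
    · calc g s = g (max s x₂) := by rw [max_eq_left h]
        _ ≤ f s := le_max_left _ _
  have hfint : ∀ a b : ℝ, IntervalIntegrable f volume a b := fun a b =>
    hfmono.intervalIntegrable
  have hfint0 : ∀ a b : ℝ, a ≤ x₂ → b ≤ x₂ → (∫ s in a..b, f s) = 0 := by
    intro a b ha hb
    rw [intervalIntegral.integral_congr (g := fun _ => (0:ℝ)) ?_]
    · simp
    · intro s hs
      rcases Set.mem_uIcc.mp hs with h | h
      · exact hfzero s (by linarith [h.2])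
      · exact hfzero s (by linarith [h.2])
  have hflow : ∀ a b : ℝ, a ≤ b → (b - a) * f a ≤ ∫ s in a..b, f s := by
    intro a b hab
    have h := intervalIntegral.integral_mono_on (μ := volume)
      (f := fun _ => f a) (g := f) hab intervalIntegrable_const (hfint a b)
      (fun u hu => hfmono hu.1)
    simpa [intervalIntegral.integral_const, smul_eq_mul] using h
  have hPcont : Continuous (fun u => ∫ s in x₁..u, f s) :=
    intervalIntegral.continuous_primitive hfint x₁
  set c : ℝ := ε⁻¹ with hcdef
  have hc : 0 < c := inv_pos.2 hε
  have hεc : ε * c = 1 := mul_inv_cancel₀ hε.ne'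
  have hc1 : 1 ≤ c := (one_le_inv₀ hε).2 hε1
  -- the second derivative
  set f₁ : ℝ → ℝ := fun t =>
    c*c*c * ((∫ s in x₁..(t+4*ε), f s) - (∫ s in x₁..(t+3*ε), f s)) with hf₁def
  have hf₁eq : ∀ t, f₁ t = c*c*c * ∫ s in (t+3*ε)..(t+4*ε), f s := by
    intro t
    have h := intervalIntegral.integral_add_adjacent_intervals
      (hfint x₁ (t+3*ε)) (hfint (t+3*ε) (t+4*ε))
    simp only [hf₁def]
    rw [← h]; ring
  have hf₁cont : Continuous f₁ := by
    apply continuous_const.mul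
    exact (hPcont.comp (continuous_id.add continuous_const)).sub
      (hPcont.comp (continuous_id.add continuous_const))
  have hf₁nn : ∀ t, 0 ≤ f₁ t := by
    intro t
    rw [hf₁eq t]
    have h : 0 ≤ ∫ s in (t+3*ε)..(t+4*ε), f s :=
      intervalIntegral.integral_nonneg (by linarith) (fun u _ => hfnn u)
    positivity
  have hf₁zero : ∀ t, t ≤ x₁ → f₁ t = 0 := by
    intro t ht
    rw [hf₁eq t, hfint0 _ _ (by linarith) (by linarith), mul_zero]
  have hf₁low : ∀ t, c*c * f (t + 3*ε) ≤ f₁ t := by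
    intro t
    rw [hf₁eq t]
    have h1 := hflow (t+3*ε) (t+4*ε) (by linarith)
    rw [show t+4*ε-(t+3*ε) = ε by ring] at h1
    have h2 : c*c*c*(ε * f (t+3*ε)) ≤ c*c*c * ∫ s in (t+3*ε)..(t+4*ε), f s :=
      mul_le_mul_of_nonneg_left h1 (by positivity)
    have h3 : c*c*c*(ε * f (t+3*ε)) = c*c * f (t+3*ε) := by
      linear_combination c*c*f (t+3*ε) * hεc
    linarith
  have hf₁int : ∀ a b : ℝ, IntervalIntegrable f₁ volume a b := fun a b =>
    hf₁cont.intervalIntegrable a b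
  -- first derivative
  set H : ℝ → ℝ := fun x => ∫ t in x₁..x, f₁ t with hHdef
  have hHderiv : ∀ x, HasDerivAt H (f₁ x) x := fun x =>
    intervalIntegral.integral_hasDerivAt_right (hf₁int x₁ x)
      (hf₁cont.stronglyMeasurableAtFilter _ _) hf₁cont.continuousAt
  have hHcont : Continuous H :=
    continuous_iff_continuousAt.2 fun x => (hHderiv x).continuousAt
  have hHint : ∀ a b : ℝ, IntervalIntegrable H volume a b := fun a b =>
    hHcont.intervalIntegrable a b
  have hHzero : ∀ x, x ≤ x₁ → H x = 0 := by
    intro x hx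
    simp only [hHdef]
    rw [intervalIntegral.integral_congr (g := fun _ => (0:ℝ)) ?_]
    · simp
    · intro s hs
      rcases Set.mem_uIcc.mp hs with h | h
      · exact hf₁zero s (by linarith [h.2])
      · exact hf₁zero s (by linarith [h.2])
  have hHnn : ∀ x, 0 ≤ H x := by
    intro x
    rcases le_total x x₁ with h | h
    · rw [hHzero x h]
    · exact intervalIntegral.integral_nonneg h (fun u _ => hf₁nn u)
  -- lower bound for H
  have hHlow : ∀ x, x₁ + ε ≤ x → c * f (x + 2*ε) ≤ H x := by
    intro x hx
    have hsplit := intervalIntegral.integral_add_adjacent_intervals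
      (hf₁int x₁ (x-ε)) (hf₁int (x-ε) x)
    have h0 : 0 ≤ ∫ t in x₁..(x-ε), f₁ t :=
      intervalIntegral.integral_nonneg (by linarith) (fun u _ => hf₁nn u)
    have hmono2 : Monotone (fun t => c*c*f (t + 3*ε)) := by
      intro a b hab
      exact mul_le_mul_of_nonneg_left (hfmono (by linarith)) (by positivity)
    have h1 : (∫ t in (x-ε)..x, c*c*f (t + 3*ε)) ≤ ∫ t in (x-ε)..x, f₁ t :=
      intervalIntegral.integral_mono_on (by linarith)
        hmono2.intervalIntegrable (hf₁int _ _) (fun u _ => hf₁low u)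
    have h2 : (∫ t in (x-ε)..x, c*c*f (t + 3*ε))
        = c*c * ∫ s in (x+2*ε)..(x+3*ε), f s := by
      rw [intervalIntegral.integral_const_mul]
      congr 1
      rw [intervalIntegral.integral_comp_add_right f (3*ε)]
      congr 1 <;> ring
    have h3 := hflow (x+2*ε) (x+3*ε) (by linarith)
    rw [show x+3*ε-(x+2*ε) = ε by ring] at h3
    have h4 : c*c*(ε * f (x+2*ε)) ≤ c*c * ∫ s in (x+2*ε)..(x+3*ε), f s :=
      mul_le_mul_of_nonneg_left h3 (by positivity)
    have h5 : c*c*(ε * f (x+2*ε)) = c * f (x+2*ε) := by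
      linear_combination c * f (x+2*ε) * hεc
    have hHx : H x = (∫ t in x₁..(x-ε), f₁ t) + ∫ t in (x-ε)..x, f₁ t := by
      simp only [hHdef]; rw [hsplit]
    linarith
  -- the function G
  set G : ℝ → ℝ := fun x => ∫ t in x₁..x, H t with hGdef
  have hGderiv : ∀ x, HasDerivAt G (H x) x := fun x =>
    intervalIntegral.integral_hasDerivAt_right (hHint x₁ x)
      (hHcont.stronglyMeasurableAtFilter _ _) hHcont.continuousAt
  have hderivG : deriv G = H := funext fun x => (hGderiv x).deriv
  have hderivH : deriv H = f₁ := funext fun x => (hHderiv x).deriv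
  have hGzero : ∀ x, x ≤ x₁ → G x = 0 := by
    intro x hx
    simp only [hGdef]
    rw [intervalIntegral.integral_congr (g := fun _ => (0:ℝ)) ?_]
    · simp
    · intro s hs
      rcases Set.mem_uIcc.mp hs with h | h
      · exact hHzero s (by linarith [h.2])
      · exact hHzero s (by linarith [h.2])
  have hGnn : ∀ x, 0 ≤ G x := by
    intro x
    rcases le_total x x₁ with h | h
    · rw [hGzero x h]
    · exact intervalIntegral.integral_nonneg h (fun u _ => hHnn u)
  have hHge : ∀ x, x₂ ≤ x → f x ≤ H x := by
    intro x hx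
    have h1 := hHlow x (by linarith)
    have h2 : f x ≤ f (x + 2*ε) := hfmono (by linarith)
    nlinarith [hfnn (x + 2*ε)]
  have hGge : ∀ x, x₂ ≤ x → f x ≤ G x := by
    intro x hx
    have hsplit := intervalIntegral.integral_add_adjacent_intervals
      (hHint x₁ (x-ε)) (hHint (x-ε) x)
    have h0 : 0 ≤ ∫ t in x₁..(x-ε), H t :=
      intervalIntegral.integral_nonneg (by linarith) (fun u _ => hHnn u)
    have hmono2 : Monotone (fun t => c*f (t + 2*ε)) := by
      intro a b hab
      exact mul_le_mul_of_nonneg_left (hfmono (by linarith)) hc.le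
    have h1 : (∫ t in (x-ε)..x, c*f (t + 2*ε)) ≤ ∫ t in (x-ε)..x, H t := by
      apply intervalIntegral.integral_mono_on (by linarith)
        hmono2.intervalIntegrable (hHint _ _)
      intro u hu
      exact hHlow u (by linarith [hu.1])
    have h2 : (∫ t in (x-ε)..x, c*f (t + 2*ε))
        = c * ∫ s in (x+ε)..(x+2*ε), f s := by
      rw [intervalIntegral.integral_const_mul]
      congr 1
      rw [intervalIntegral.integral_comp_add_right f (2*ε)]
      congr 1 <;> ring
    have h3 := hflow (x+ε) (x+2*ε) (by linarith)
    rw [show x+2*ε-(x+ε) = ε by ring] at h3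
    have h4 : c*(ε * f (x+ε)) ≤ c * ∫ s in (x+ε)..(x+2*ε), f s :=
      mul_le_mul_of_nonneg_left h3 hc.le
    have h5 : c*(ε * f (x+ε)) = f (x+ε) := by
      linear_combination f (x+ε) * hεc
    have h6 : f x ≤ f (x+ε) := hfmono (by linarith)
    have hGx : G x = (∫ t in x₁..(x-ε), H t) + ∫ t in (x-ε)..x, H t := by
      simp only [hGdef]; rw [hsplit]
    linarith
  have hdG : Differentiable ℝ G := fun x => (hGderiv x).differentiableAt
  have hdH : Differentiable ℝ H := fun x => (hHderiv x).differentiableAt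
  have hG2 : ContDiff ℝ 2 G := by
    have h2 : (2 : WithTop ℕ∞) = 1 + 1 := by norm_num
    rw [h2, contDiff_succ_iff_deriv]
    refine ⟨hdG, ?_, ?_⟩
    · intro h; exact absurd h (by norm_num)
    · rw [hderivG, contDiff_one_iff_deriv]
      exact ⟨hdH, by rw [hderivH]; exact hf₁cont⟩
  refine ⟨G, hG2, fun x hx => hGzero x hx, ?_, ?_⟩
  · intro x _
    rw [hderivG, hderivH]
    exact hf₁nn x
  · intro x hx
    constructor
    · rcases le_total x x₂ with h | h
      · rw [hzero x hx h]; exact hGnn x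
      · exact le_trans (hgf x hx) (hGge x h)
    · rw [hderivG]
      rcases le_total x x₂ with h | h
      · rw [hzero x hx h]; exact hHnn x
      · exact le_trans (hgf x hx) (hHge x h)

end
end
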